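/- Let d : ℝ × ℝ → [0,∞) be C² on ℝ² \ Δ with: (H1) d(x,y) > 0 for (x,y) ∉ Δ and d(x,x) = 0; (H2) d(x,y) = d(y,x); (H3) ∂₁∂₂ d(x,y) ≥ 0 for (x,y) ∉ Δ; (H4A) for every fixed a, the function t ↦ d(t,a) is nonincreasing on (-∞, a) and nondecreasing on (a, ∞). Then d is a distance on ℝ (i.e., it satisfies the triangle inequality). -/

import Mathlib

/-!
For `x < y < z`, (H3) says that `∂₂d(s, t)` is nondecreasing in `s < t`, so `t ↦ d(x, t) - d(y, t)`
has nonpositive derivative on `(y, ∞)`. Hence `d(x, z) - d(y, z) ≤ d(x, t) - d(y, t) ≤ d(x, t)`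
for `t ∈ (y, z]`, and letting `t ↓ y` gives the triangle inequality; this needs only continuity
of `d(x, ·)` at `y`, since `d` may jump at the diagonal. When `y` lies outside `[x, z]`, the
triangle inequality follows from (H4A) alone.
-/

open Set Filter

def IsDistance (d : ℝ → ℝ → ℝ) : Prop :=
  (∀ x y, 0 ≤ d x y) ∧ (∀ x y, d x y = 0 ↔ x = y) ∧
  (∀ x y, d x y = d y x) ∧ (∀ x y z, d x z ≤ d x y + d y z)

noncomputable def partialSnd (d : ℝ → ℝ → ℝ) (p : ℝ × ℝ) : ℝ :=
  fderiv ℝ (fun q : ℝ × ℝ => d q.1 q.2) p (0, 1)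

theorem hasDerivAt_partialSnd {d : ℝ → ℝ → ℝ} {a b : ℝ}
    (hd : DifferentiableAt ℝ (fun q : ℝ × ℝ => d q.1 q.2) (a, b)) :
    HasDerivAt (d a) (partialSnd d (a, b)) b :=
  hd.hasFDerivAt.comp_hasDerivAt b ((hasDerivAt_const b a).prodMk (hasDerivAt_id b))

theorem differentiableOn_partialSnd {d : ℝ → ℝ → ℝ} {U : Set (ℝ × ℝ)} (hU : IsOpen U)
    (hd : ContDiffOn ℝ 2 (fun q : ℝ × ℝ => d q.1 q.2) U) :
    DifferentiableOn ℝ (partialSnd d) U :=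
  ((hd.fderiv_of_isOpen hU (m := 1) (by norm_num)).differentiableOn one_ne_zero).clm_apply
    (differentiableOn_const _)

section OffDiagonal

variable {d : ℝ → ℝ → ℝ}

theorem isOpen_ne_real : IsOpen {p : ℝ × ℝ | p.1 ≠ p.2} :=
  isOpen_ne_fun continuous_fst continuous_snd

theorem hasDerivAt_partialSnd_of_ne
    (hd : ContDiffOn ℝ 2 (fun p : ℝ × ℝ => d p.1 p.2) {p : ℝ × ℝ | p.1 ≠ p.2})
    {a b : ℝ} (hab : a ≠ b) : HasDerivAt (d a) (partialSnd d (a, b)) b :=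
  hasDerivAt_partialSnd <|
    (hd.contDiffAt (isOpen_ne_real.mem_nhds hab)).differentiableAt (by norm_num)

theorem monotoneOn_partialSnd
    (hd : ContDiffOn ℝ 2 (fun p : ℝ × ℝ => d p.1 p.2) {p : ℝ × ℝ | p.1 ≠ p.2})
    (h3 : ∀ a b : ℝ, a ≠ b → 0 ≤ deriv (fun s => deriv (fun t => d s t) b) a) (t : ℝ) :
    MonotoneOn (fun s => partialSnd d (s, t)) (Iio t) := by
  have hdiff : DifferentiableOn ℝ (fun s => partialSnd d (s, t)) (Iio t) := fun s hs =>
    ((differentiableOn_partialSnd isOpen_ne_real hd).differentiableAt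
      (isOpen_ne_real.mem_nhds (show s ≠ t from ne_of_lt hs))).comp s
      (differentiableAt_id.prodMk (differentiableAt_const t)) |>.differentiableWithinAt
  refine monotoneOn_of_deriv_nonneg (convex_Iio t) hdiff.continuousOn
    (by rwa [interior_Iio]) fun s hs => ?_
  rw [interior_Iio] at hs
  have hpartial :
      (fun s' => deriv (fun t' => d s' t') t) =ᶠ[nhds s] fun s' => partialSnd d (s', t) :=
    mem_of_superset (isOpen_Iio.mem_nhds hs) fun s' hs' =>
      (hasDerivAt_partialSnd_of_ne hd (ne_of_lt hs')).deriv
  exact hpartial.deriv_eq ▸ h3 s t (ne_of_lt hs)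

theorem antitoneOn_sub_of_le
    (hd : ContDiffOn ℝ 2 (fun p : ℝ × ℝ => d p.1 p.2) {p : ℝ × ℝ | p.1 ≠ p.2})
    (h3 : ∀ a b : ℝ, a ≠ b → 0 ≤ deriv (fun s => deriv (fun t => d s t) b) a)
    {x y : ℝ} (hxy : x ≤ y) : AntitoneOn (fun t => d x t - d y t) (Ioi y) := by
  have hderiv : ∀ t ∈ Ioi y,
      HasDerivAt (fun t => d x t - d y t) (partialSnd d (x, t) - partialSnd d (y, t)) t :=
    fun t ht => (hasDerivAt_partialSnd_of_ne hd (hxy.trans_lt ht).ne).sub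
      (hasDerivAt_partialSnd_of_ne hd (ne_of_lt ht))
  refine antitoneOn_of_deriv_nonpos (convex_Ioi y)
    (fun t ht => (hderiv t ht).continuousAt.continuousWithinAt) ?_ ?_ <;> rw [interior_Ioi]
  · exact fun t ht => (hderiv t ht).differentiableAt.differentiableWithinAt
  · intro t ht
    rw [(hderiv t ht).deriv, sub_nonpos]
    exact monotoneOn_partialSnd hd h3 t (hxy.trans_lt ht) ht hxy

theorem triangle_ineq_of_lt_of_lt (hnonneg : ∀ x y, 0 ≤ d x y)
    (hd : ContDiffOn ℝ 2 (fun p : ℝ × ℝ => d p.1 p.2) {p : ℝ × ℝ | p.1 ≠ p.2})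
    (h3 : ∀ a b : ℝ, a ≠ b → 0 ≤ deriv (fun s => deriv (fun t => d s t) b) a)
    {x y z : ℝ} (hxy : x < y) (hyz : y < z) : d x z ≤ d x y + d y z := by
  have hle : ∀ t ∈ Ioc y z, d x z ≤ d x t + d y z := fun t ht => by
    have := antitoneOn_sub_of_le hd h3 hxy.le ht.1 (show z ∈ Ioi y from hyz) ht.2
    linarith [hnonneg y t]
  have hcont : ContinuousAt (d x) y := (hasDerivAt_partialSnd_of_ne hd hxy.ne).continuousAt
  refine ContinuousWithinAt.closure_le (s := Ioc y z) (f := fun _ => d x z)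
    (g := fun t => d x t + d y z) ?_ continuousWithinAt_const
    (hcont.continuousWithinAt.add continuousWithinAt_const) hle
  rw [closure_Ioc hyz.ne]
  exact left_mem_Icc.2 hyz.le

end OffDiagonal

theorem distance_of_H4A (d : ℝ → ℝ → ℝ)
    (hnonneg : ∀ x y, 0 ≤ d x y)
    (hC2 : ContDiffOn ℝ 2 (fun p : ℝ × ℝ => d p.1 p.2) {p : ℝ × ℝ | p.1 ≠ p.2})
    (h1 : ∀ x y : ℝ, x ≠ y → 0 < d x y) (h1' : ∀ x : ℝ, d x x = 0)
    (h2 : ∀ x y, d x y = d y x)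
    (h3 : ∀ a b : ℝ, a ≠ b → 0 ≤ deriv (fun s => deriv (fun t => d s t) b) a)
    (h4A : ∀ a : ℝ, AntitoneOn (fun t => d t a) (Set.Iio a) ∧
      MonotoneOn (fun t => d t a) (Set.Ioi a)) :
    IsDistance d := by
  have triangle_of_lt : ∀ x y z, x < z → d x z ≤ d x y + d y z := by
    intro x y z hxz
    rcases lt_trichotomy y x with hyx | rfl | hxy
    · linarith [(h4A z).1 (hyx.trans hxz) hxz hyx.le, hnonneg x y]
    · linarith [h1' y]
    rcases lt_trichotomy y z with hyz | rfl | hzy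
    · exact triangle_ineq_of_lt_of_lt hnonneg hC2 h3 hxy hyz
    · linarith [h1' y]
    · linarith [(h4A x).2 hxz (hxz.trans hzy) hzy.le, h2 x z, h2 x y, hnonneg y z]
  refine ⟨hnonneg, fun x y => ⟨fun h => ?_, fun h => h ▸ h1' x⟩, h2, fun x y z => ?_⟩
  · by_contra hxy
    exact (h1 x y hxy).ne' h
  rcases lt_trichotomy x z with hxz | rfl | hzx
  · exact triangle_of_lt x y z hxz
  · linarith [h1' x, hnonneg x y, hnonneg y x]
  · linarith [triangle_of_lt z y x hzx, h2 x z, h2 x y, h2 y z]
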